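/- arXiv:1308.1628 — 2 statements merged into one kernel-verified Lean document; each statement's English description precedes it below -/
import Mathlib

section
/- The function φ̃₂ satisfies, for all y ∈ ℝ, the separated eigenvalue equation with eigenvalue λ = 2 and angular parameter l = b: (1 + Q/(2P(y)))·φ̃₂''(y) + (P'(y)/(2P(y)))·φ̃₂'(y) + (2 − b²/P(y))·φ̃₂(y) = 0. -/
open Real

/-- Rescaled solution `φ̃₁(y) = √((b²+c²−a²)/(2(c²−a²)))·sin y`. -/
noncomputable def phi1 (a b c y : ℝ) : ℝ :=
  Real.sqrt ((b ^ 2 + c ^ 2 - a ^ 2) / (2 * (c ^ 2 - a ^ 2))) * Real.sin y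

/-- Rescaled solution `φ̃₂(y) = √((a²+c²−b²)/(2(c²−b²)))·cos y`. -/
noncomputable def phi2 (a b c y : ℝ) : ℝ :=
  Real.sqrt ((a ^ 2 + c ^ 2 - b ^ 2) / (2 * (c ^ 2 - b ^ 2))) * Real.cos y

/-- Rescaled solution `φ̃₃(y) = √((a²+b²−c²)/(2(b²−c²)))·√(1 − ((b²−a²)/(c²−a²))·sin² y)`. -/
noncomputable def phi3 (a b c y : ℝ) : ℝ :=
  Real.sqrt ((a ^ 2 + b ^ 2 - c ^ 2) / (2 * (b ^ 2 - c ^ 2))) *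
    Real.sqrt (1 - (b ^ 2 - a ^ 2) / (c ^ 2 - a ^ 2) * Real.sin y ^ 2)

/-- `P(y) = (c² + (b²−a²)·cos 2y)/2`. -/
noncomputable def Pm (a b c y : ℝ) : ℝ := (c ^ 2 + (b ^ 2 - a ^ 2) * Real.cos (2 * y)) / 2

/-- `Q = c² − a² − b²`. -/
noncomputable def Qm (a b c : ℝ) : ℝ := c ^ 2 - a ^ 2 - b ^ 2

theorem hasDerivAt_Pm (a b c y : ℝ) :
    HasDerivAt (Pm a b c) (-(b ^ 2 - a ^ 2) * sin (2 * y)) y := by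
  have h := ((((hasDerivAt_id' y).const_mul 2).cos.const_mul (b ^ 2 - a ^ 2)).const_add
    (c ^ 2)).div_const 2
  exact h.congr_deriv (by ring)

theorem Pm_pos {a b c : ℝ} (ha : a ^ 2 < c ^ 2) (hb : b ^ 2 < c ^ 2) (y : ℝ) : 0 < Pm a b c y := by
  have hcos : |(b ^ 2 - a ^ 2) * cos (2 * y)| < c ^ 2 :=
    calc |(b ^ 2 - a ^ 2) * cos (2 * y)| ≤ |b ^ 2 - a ^ 2| := by
          simpa [abs_mul] using mul_le_of_le_one_right (abs_nonneg _) (abs_cos_le_one (2 * y))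
      _ < c ^ 2 := abs_sub_lt_iff.mpr ⟨by nlinarith [sq_nonneg a], by nlinarith [sq_nonneg b]⟩
  unfold Pm
  linarith [neg_abs_le ((b ^ 2 - a ^ 2) * cos (2 * y))]

theorem deriv_const_mul_cos (K : ℝ) : deriv (fun y => K * cos y) = fun y => -(K * sin y) := by
  funext y
  simp

theorem deriv_deriv_const_mul_cos (K y : ℝ) :
    deriv (deriv fun y => K * cos y) y = -(K * cos y) := by
  simp

/-- Multiplied by `2P`, the equation reads `(2P - Q - 2b²)·φ = -P'·φ'`, and both sides equal
`-2(b² - a²) sin² y · φ` because `φ'' = -φ`, `cos 2y = 1 - 2 sin² y` and `sin 2y = 2 sin y cos y`. -/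
theorem separated_equation_const_mul_cos {a b c : ℝ} (ha : a ^ 2 < c ^ 2) (hb : b ^ 2 < c ^ 2)
    (K y : ℝ) :
    (1 + Qm a b c / (2 * Pm a b c y)) * deriv (deriv fun y => K * cos y) y
      + deriv (Pm a b c) y / (2 * Pm a b c y) * deriv (fun y => K * cos y) y
      + (2 - b ^ 2 / Pm a b c y) * (K * cos y) = 0 := by
  have hP := (Pm_pos ha hb y).ne'
  rw [deriv_deriv_const_mul_cos, deriv_const_mul_cos, (hasDerivAt_Pm a b c y).deriv]
  field_simp
  unfold Pm Qm
  rw [cos_two_mul, sin_two_mul]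
  linear_combination (2 * K * (b ^ 2 - a ^ 2) * cos y) * sin_sq_add_cos_sq y

theorem phi2_separated_equation_general (a b c : ℝ) (ha : a ^ 2 < c ^ 2) (hb : b ^ 2 < c ^ 2) :
    ∀ y : ℝ,
      (1 + Qm a b c / (2 * Pm a b c y)) * deriv (deriv (phi2 a b c)) y
        + deriv (Pm a b c) y / (2 * Pm a b c y) * deriv (phi2 a b c) y
        + (2 - b ^ 2 / Pm a b c y) * phi2 a b c y = 0 :=
  separated_equation_const_mul_cos ha hb _

/-- The function `φ̃` satisfies, for all `y ∈ ℝ`, the separated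
eigenvalue equation with eigenvalue `λ = 2` and angular parameter `l = b`:
`(1 + Q/(2P(y)))·φ̃'' + (P'(y)/(2P(y)))·φ̃' + (2 − l²/P(y))·φ̃ = 0`. -/
theorem phi2_separated_equation (a b c : ℝ) (ha : a ^ 2 < c ^ 2) (hb : b ^ 2 < c ^ 2)
    (habc : a ^ 2 + b ^ 2 ≤ c ^ 2) :
    ∀ y : ℝ,
      (1 + Qm a b c / (2 * Pm a b c y)) * deriv (deriv (phi2 a b c)) y
        + deriv (Pm a b c) y / (2 * Pm a b c y) * deriv (phi2 a b c) y
        + (2 - b ^ 2 / Pm a b c y) * phi2 a b c y = 0 :=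
  phi2_separated_equation_general a b c ha hb
end

section
/- One has the identity 8·E(1/2) − 3·K(1/2) = 6·E(2√2/3); consequently 2π(8E(1/2) − 3K(1/2)) = 12π·E(2√2/3), i.e. the value Λ₁(T_{1,0,2}) = S(1,0,2) coincides with the value Λ₁(τ̃₃,₁) = 12π·E(2√2/3) attained by the bipolar Lawson Klein bottle. -/
open Real

/-- The complete elliptic integral of the first kind,
`K(k) = ∫₀¹ dα/(√(1−α²)·√(1−k²α²))`. -/
noncomputable def ellipticK (k : ℝ) : ℝ :=
  ∫ α in (0:ℝ)..1, 1 / (Real.sqrt (1 - α ^ 2) * Real.sqrt (1 - k ^ 2 * α ^ 2))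

/-- The complete elliptic integral of the second kind,
`E(k) = ∫₀¹ √(1−k²α²)/√(1−α²) dα`. -/
noncomputable def ellipticE (k : ℝ) : ℝ :=
  ∫ α in (0:ℝ)..1, Real.sqrt (1 - k ^ 2 * α ^ 2) / Real.sqrt (1 - α ^ 2)

open MeasureTheory Set intervalIntegral

/-!
With `w(s) = √((1 - s²)(4 - s²))`, the integrand of `8·E(1/2) - 3·K(1/2)` is `2(5 - 2s²)/w`.
The substitution `t = 3s/(2 + s²)`, an increasing bijection of `[0, 1]`, rationalises the
integrand of `E(2√2/3)` into `3(2 - s²)²/((2 + s²)² w)`. The difference of the first and six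
times the second is the derivative of `-4sw/(2 + s²)`, which vanishes at `0` and `1`.
-/

lemma intervalIntegrable_one_div_sqrt_one_sub_sq :
    IntervalIntegrable (fun s : ℝ => 1 / √(1 - s ^ 2)) volume (-1) 1 := by
  refine intervalIntegrable_deriv_of_nonneg continuous_arcsin.continuousOn (fun s hs => ?_)
    (fun s _ => by positivity)
  rw [min_eq_left (by norm_num), max_eq_right (by norm_num)] at hs
  exact hasDerivAt_arcsin hs.1.ne' hs.2.ne

lemma intervalIntegrable_one_div_sqrt_one_sub_sq_zero_one :
    IntervalIntegrable (fun s : ℝ => 1 / √(1 - s ^ 2)) volume 0 1 :=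
  intervalIntegrable_one_div_sqrt_one_sub_sq.mono_set <| by
    rw [uIcc_of_le zero_le_one, uIcc_of_le (by norm_num)]
    exact Icc_subset_Icc (by norm_num) le_rfl

lemma intervalIntegrable_ellipticE_integrand (k : ℝ) :
    IntervalIntegrable (fun s => √(1 - k ^ 2 * s ^ 2) / √(1 - s ^ 2)) volume 0 1 := by
  simp_rw [div_eq_mul_one_div √(1 - k ^ 2 * _)]
  exact intervalIntegrable_one_div_sqrt_one_sub_sq_zero_one.continuousOn_mul
    (by fun_prop)

lemma intervalIntegrable_ellipticK_integrand {k : ℝ} (hk : k ^ 2 < 1) :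
    IntervalIntegrable (fun s => 1 / (√(1 - s ^ 2) * √(1 - k ^ 2 * s ^ 2))) volume 0 1 := by
  have hpos : ∀ s ∈ uIcc (0 : ℝ) 1, 0 < 1 - k ^ 2 * s ^ 2 := fun s hs => by
    rw [uIcc_of_le zero_le_one] at hs
    nlinarith [hs.1, hs.2, sq_nonneg k, mul_le_one₀ hs.2 hs.1 hs.2]
  have hcont : ContinuousOn (fun s => 1 / √(1 - k ^ 2 * s ^ 2)) (uIcc 0 1) :=
    continuousOn_const.div (by fun_prop) fun s hs => (sqrt_pos.2 (hpos s hs)).ne'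
  refine (intervalIntegrable_one_div_sqrt_one_sub_sq_zero_one.continuousOn_mul
    hcont).congr fun s _ => ?_
  simp only [one_div, mul_inv, mul_comm]

section Substitution

variable (g : ℝ → ℝ)

lemma hasDerivAt_three_mul_div_two_add_sq (s : ℝ) :
    HasDerivAt (fun s => 3 * s / (2 + s ^ 2)) (3 * (2 - s ^ 2) / (2 + s ^ 2) ^ 2) s := by
  have h := ((hasDerivAt_id s).const_mul 3).div ((hasDerivAt_pow 2 s).const_add 2)
    (by positivity)
  refine h.congr_deriv ?_
  simp only [id, Nat.cast_ofNat]
  ring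

lemma three_mul_two_sub_sq_div_nonneg {s : ℝ} (hs : s ∈ Ioo (0 : ℝ) 1) :
    0 ≤ 3 * (2 - s ^ 2) / (2 + s ^ 2) ^ 2 := by
  have : s ^ 2 ≤ 2 := by nlinarith [hs.1, hs.2]
  positivity

lemma integral_comp_three_mul_div_two_add_sq :
    ∫ s in (0 : ℝ)..1, 3 * (2 - s ^ 2) / (2 + s ^ 2) ^ 2 * g (3 * s / (2 + s ^ 2)) =
      ∫ t in (0 : ℝ)..1, g t := by
  have h := integral_Icc_deriv_smul_of_deriv_nonneg (g := g)
    (fun s _ => (hasDerivAt_three_mul_div_two_add_sq s).continuousAt.continuousWithinAt)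
    (fun s _ => hasDerivAt_three_mul_div_two_add_sq s)
    (fun s hs => three_mul_two_sub_sq_div_nonneg hs) zero_le_one
  norm_num only [smul_eq_mul] at h
  rw [integral_of_le zero_le_one, integral_of_le zero_le_one, ← integral_Icc_eq_integral_Ioc,
    ← integral_Icc_eq_integral_Ioc, h]

lemma intervalIntegrable_comp_three_mul_div_two_add_sq_iff :
    IntervalIntegrable (fun s => 3 * (2 - s ^ 2) / (2 + s ^ 2) ^ 2 * g (3 * s / (2 + s ^ 2)))
      volume 0 1 ↔ IntervalIntegrable g volume 0 1 := by
  have h := integrableOn_Icc_deriv_smul_iff_of_deriv_nonneg (g := g)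
    (fun s _ => (hasDerivAt_three_mul_div_two_add_sq s).continuousAt.continuousWithinAt)
    (fun s _ => hasDerivAt_three_mul_div_two_add_sq s)
    (fun s hs => three_mul_two_sub_sq_div_nonneg hs) zero_le_one
  norm_num only [smul_eq_mul] at h
  rwa [intervalIntegrable_iff_integrableOn_Icc_of_le zero_le_one,
    intervalIntegrable_iff_integrableOn_Icc_of_le zero_le_one]

end Substitution

lemma sqrt_one_sub_eight_ninths_mul_sq_three_mul_div {s : ℝ} (hs : s ^ 2 ≤ 2) :
    √(1 - (2 * √2 / 3) ^ 2 * (3 * s / (2 + s ^ 2)) ^ 2) = (2 - s ^ 2) / (2 + s ^ 2) := by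
  have h2 : (2 * √2 / 3) ^ 2 = 8 / 9 := by
    rw [div_pow, mul_pow, sq_sqrt zero_le_two]; norm_num
  rw [h2, show 1 - 8 / 9 * (3 * s / (2 + s ^ 2)) ^ 2 = ((2 - s ^ 2) / (2 + s ^ 2)) ^ 2 by
    field_simp; ring]
  exact sqrt_sq (by have := sub_nonneg.2 hs; positivity)

lemma sqrt_one_sub_sq_three_mul_div (s : ℝ) :
    √(1 - (3 * s / (2 + s ^ 2)) ^ 2) = √((1 - s ^ 2) * (4 - s ^ 2)) / (2 + s ^ 2) := by
  rw [show 1 - (3 * s / (2 + s ^ 2)) ^ 2 = (1 - s ^ 2) * (4 - s ^ 2) / (2 + s ^ 2) ^ 2 by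
    field_simp; ring, sqrt_div' _ (by positivity), sqrt_sq (by positivity)]

lemma ellipticE_integrand_comp_three_mul_div {s : ℝ} (hs : s ^ 2 < 1) :
    3 * (2 - s ^ 2) / (2 + s ^ 2) ^ 2 *
        (√(1 - (2 * √2 / 3) ^ 2 * (3 * s / (2 + s ^ 2)) ^ 2) /
          √(1 - (3 * s / (2 + s ^ 2)) ^ 2)) =
      3 * (2 - s ^ 2) ^ 2 / ((2 + s ^ 2) ^ 2 * √((1 - s ^ 2) * (4 - s ^ 2))) := by
  have hw : 0 < √((1 - s ^ 2) * (4 - s ^ 2)) := sqrt_pos.2 (by nlinarith)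
  rw [sqrt_one_sub_eight_ninths_mul_sq_three_mul_div (by linarith),
    sqrt_one_sub_sq_three_mul_div]
  field_simp

lemma eight_mul_ellipticE_integrand_sub_three_mul_ellipticK_integrand {s : ℝ} (hs : s ^ 2 < 1) :
    8 * (√(1 - (1 / 2) ^ 2 * s ^ 2) / √(1 - s ^ 2)) -
        3 * (1 / (√(1 - s ^ 2) * √(1 - (1 / 2) ^ 2 * s ^ 2))) =
      2 * (5 - 2 * s ^ 2) / √((1 - s ^ 2) * (4 - s ^ 2)) := by
  have h1 : 0 < 1 - s ^ 2 := by linarith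
  have h4 : 0 < 4 - s ^ 2 := by linarith
  have hquarter : √(1 - (1 / 2) ^ 2 * s ^ 2) = √(4 - s ^ 2) / 2 := by
    rw [show 1 - (1 / 2 : ℝ) ^ 2 * s ^ 2 = (4 - s ^ 2) / 2 ^ 2 by ring,
      sqrt_div' _ (by norm_num), sqrt_sq zero_le_two]
  have hw1 := sqrt_pos.2 h1
  have hw4 := sqrt_pos.2 h4
  rw [hquarter, sqrt_mul h1.le]
  field_simp
  linear_combination 8 * sq_sqrt h4.le

lemma hasDerivAt_neg_four_mul_sqrt_div {s : ℝ} (hs : s ^ 2 < 1) :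
    HasDerivAt (fun s => -4 * s * √((1 - s ^ 2) * (4 - s ^ 2)) / (2 + s ^ 2))
      (2 * (5 - 2 * s ^ 2) / √((1 - s ^ 2) * (4 - s ^ 2)) -
        6 * (3 * (2 - s ^ 2) ^ 2 / ((2 + s ^ 2) ^ 2 * √((1 - s ^ 2) * (4 - s ^ 2))))) s := by
  have hpos : 0 < (1 - s ^ 2) * (4 - s ^ 2) := by nlinarith
  have hw : 0 < √((1 - s ^ 2) * (4 - s ^ 2)) := sqrt_pos.2 hpos
  have hp : HasDerivAt (fun s : ℝ => (1 - s ^ 2) * (4 - s ^ 2)) (4 * s ^ 3 - 10 * s) s := by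
    have h := ((hasDerivAt_pow 2 s).const_sub 1).mul ((hasDerivAt_pow 2 s).const_sub 4)
    refine h.congr_deriv ?_
    simp only [Nat.cast_ofNat]
    ring
  have h := (((hasDerivAt_id s).const_mul (-4)).mul (hp.sqrt hpos.ne')).div
    ((hasDerivAt_pow 2 s).const_add 2) (by positivity)
  refine h.congr_deriv ?_
  simp only [id, Pi.mul_apply, Nat.cast_ofNat]
  field_simp
  linear_combination (8 * s ^ 2 - 16) * sq_sqrt hpos.le

lemma integral_eq_six_mul_integral
    (hA : IntervalIntegrable (fun s => 2 * (5 - 2 * s ^ 2) / √((1 - s ^ 2) * (4 - s ^ 2)))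
      volume 0 1)
    (hB : IntervalIntegrable
      (fun s => 3 * (2 - s ^ 2) ^ 2 / ((2 + s ^ 2) ^ 2 * √((1 - s ^ 2) * (4 - s ^ 2))))
      volume 0 1) :
    ∫ s in (0 : ℝ)..1, 2 * (5 - 2 * s ^ 2) / √((1 - s ^ 2) * (4 - s ^ 2)) =
      6 * ∫ s in (0 : ℝ)..1,
        3 * (2 - s ^ 2) ^ 2 / ((2 + s ^ 2) ^ 2 * √((1 - s ^ 2) * (4 - s ^ 2))) := by
  have hcont : Continuous fun s : ℝ => -4 * s * √((1 - s ^ 2) * (4 - s ^ 2)) / (2 + s ^ 2) :=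
    Continuous.div (by fun_prop) (by fun_prop) fun s => by positivity
  have h := integral_eq_sub_of_hasDerivAt_of_le zero_le_one hcont.continuousOn
    (fun s hs => hasDerivAt_neg_four_mul_sqrt_div (by nlinarith [hs.1, hs.2]))
    (hA.sub (hB.const_mul 6))
  rw [integral_sub hA (hB.const_mul 6), intervalIntegral.integral_const_mul] at h
  norm_num at h
  linarith

theorem eight_mul_ellipticE_half_sub_three_mul_ellipticK_half :
    8 * ellipticE (1 / 2) - 3 * ellipticK (1 / 2) = 6 * ellipticE (2 * √2 / 3) := by
  have hsq : ∀ s ∈ uIoo (0 : ℝ) 1, s ^ 2 < 1 := fun s hs => by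
    rw [uIoo_of_le zero_le_one] at hs
    nlinarith [hs.1, hs.2]
  have hE := (intervalIntegrable_ellipticE_integrand (1 / 2)).const_mul 8
  have hK := (intervalIntegrable_ellipticK_integrand (k := 1 / 2) (by norm_num)).const_mul 3
  have hE' := (intervalIntegrable_comp_three_mul_div_two_add_sq_iff _).2
    (intervalIntegrable_ellipticE_integrand (2 * √2 / 3))
  have hA := fun s hs =>
    eight_mul_ellipticE_integrand_sub_three_mul_ellipticK_integrand (hsq s hs)
  have hB := fun s hs => ellipticE_integrand_comp_three_mul_div (hsq s hs)
  calc 8 * ellipticE (1 / 2) - 3 * ellipticK (1 / 2)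
      = ∫ s in (0 : ℝ)..1, 8 * (√(1 - (1 / 2) ^ 2 * s ^ 2) / √(1 - s ^ 2)) -
          3 * (1 / (√(1 - s ^ 2) * √(1 - (1 / 2) ^ 2 * s ^ 2))) := by
        rw [integral_sub hE hK, intervalIntegral.integral_const_mul,
          intervalIntegral.integral_const_mul, ellipticE, ellipticK]
    _ = ∫ s in (0 : ℝ)..1, 2 * (5 - 2 * s ^ 2) / √((1 - s ^ 2) * (4 - s ^ 2)) :=
        integral_congr_uIoo hA
    _ = 6 * ∫ s in (0 : ℝ)..1,
          3 * (2 - s ^ 2) ^ 2 / ((2 + s ^ 2) ^ 2 * √((1 - s ^ 2) * (4 - s ^ 2))) :=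
        integral_eq_six_mul_integral ((hE.sub hK).congr_uIoo hA) (hE'.congr_uIoo hB)
    _ = 6 * ellipticE (2 * √2 / 3) := by
        rw [← integral_congr_uIoo hB]
        exact congrArg _ (integral_comp_three_mul_div_two_add_sq
          fun t => √(1 - (2 * √2 / 3) ^ 2 * t ^ 2) / √(1 - t ^ 2))

/-- `8·E(1/2) − 3·K(1/2) = 6·E(2√2/3)`; consequently
`2π(8E(1/2) − 3K(1/2)) = 12π·E(2√2/3)`, i.e. the value `Λ₁(T_{1,0,2}) = S(1,0,2)`
coincides with the value `Λ₁(τ̃₃,₁) = 12π·E(2√2/3)` attained by the bipolar Lawson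
Klein bottle. -/
theorem S_102_eq_bipolar_lawson_value :
    8 * ellipticE (1 / 2) - 3 * ellipticK (1 / 2) = 6 * ellipticE (2 * Real.sqrt 2 / 3) ∧
    2 * Real.pi * (8 * ellipticE (1 / 2) - 3 * ellipticK (1 / 2)) =
      12 * Real.pi * ellipticE (2 * Real.sqrt 2 / 3) := by
  have key := eight_mul_ellipticE_half_sub_three_mul_ellipticK_half
  exact ⟨key, by rw [key]; ring⟩
end
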